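/- Let k ≥ 3 and n > k + 1 with both k and n odd, and suppose k + 1 < n ≤ 3k - 2. Then H_{k,n} has diameter 2, the unique vertex of degree k+1 has status 2n-k-3, every vertex of degree k has status 2n-k-2, and W(H_{k,n}) = (1/2)·n·(2n-k-2) - 1/2. -/

import Mathlib

/-!
Write `k = 2m + 1` and `n = 2h + 1`. Then `H_{k,n}` is the circulant graph in which each vertex
is joined to the `m` nearest vertices on either side of the circle, together with the chords
`{a, a + h}` for `a ≤ h`; every vertex lies on exactly one chord except `h`, which lies on two.
Because `h ≤ 3m`, any two nonadjacent vertices have a common neighbour: along the circle when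
they are at most `2m` apart, and otherwise through the chord at one of them. So distances are
`1` between adjacent and `2` between other distinct vertices, the status of `x` is
`2(n - 1) - deg x`, and the Wiener index is `n(n - 1) - |E|` with `2|E| = nk + 1`.
-/

open Finset SimpleGraph

/-- The status of a vertex: sum of distances to all other vertices. -/
noncomputable def status {V : Type*} [Fintype V] (G : SimpleGraph V) (x : V) : ℕ :=
  ∑ y, G.dist x y

/-- The Wiener index: sum of distances over unordered pairs of vertices. -/
noncomputable def wiener {V : Type*} [Fintype V] [DecidableEq V] (G : SimpleGraph V) : ℚ :=
  (∑ p ∈ Finset.univ.offDiag, (G.dist p.1 p.2 : ℚ)) / 2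

/-- Eccentricity of a vertex. -/
noncomputable def ecc {V : Type*} [Fintype V] (G : SimpleGraph V) (x : V) : ℕ :=
  Finset.univ.sup (fun y => G.dist x y)

/-- Diameter: maximum distance between pairs of vertices. -/
noncomputable def graphDiam {V : Type*} [Fintype V] (G : SimpleGraph V) : ℕ :=
  Finset.univ.sup (fun p : V × V => G.dist p.1 p.2)

/-- The set of vertices at distance exactly `i` from `x`. -/
noncomputable def sphere {V : Type*} [Fintype V] [DecidableEq V] (G : SimpleGraph V) (x : V) (i : ℕ) :
    Finset V :=
  Finset.univ.filter (fun y => G.dist x y = i)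

/-- `G` is `k`-connected: more than `k` vertices and removing any `k-1` vertices
leaves a connected graph. -/
def IsKConnected {V : Type*} [Fintype V] (G : SimpleGraph V) (k : ℕ) : Prop :=
  k < Fintype.card V ∧
    ∀ S : Finset V, S.card ≤ k - 1 → (G.induce ((↑S : Set V)ᶜ)).Connected
/-- Circular distance between two positions on a cycle of length `n`. -/
def circDist (n : ℕ) (i j : Fin n) : ℕ :=
  min ((i.val + n - j.val) % n) ((j.val + n - i.val) % n)

lemma circDist_comm (n : ℕ) (i j : Fin n) : circDist n i j = circDist n j i := by
  unfold circDist; exact min_comm _ _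

/-- The Harary graph `H_{k,n}` for `k` even: each vertex is adjacent to the
nearest `k/2` vertices in each direction around the circle. -/
def hararyEven (k n : ℕ) : SimpleGraph (Fin n) where
  Adj i j := i ≠ j ∧ circDist n i j ≤ k / 2
  symm := ⟨by
    intro i j h
    exact ⟨h.1.symm, by rw [circDist_comm]; exact h.2⟩⟩
  loopless := ⟨fun i h => h.1 rfl⟩

/-- The Harary graph `H_{k,n}` for `k` odd and `n` even: each vertex is adjacent to
the nearest `(k-1)/2` vertices in each direction and to the diametrically opposite
vertex. -/
def hararyOddEven (k n : ℕ) : SimpleGraph (Fin n) where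
  Adj i j := i ≠ j ∧ (circDist n i j ≤ (k - 1) / 2 ∨ circDist n i j = n / 2)
  symm := ⟨by
    intro i j h
    refine ⟨h.1.symm, ?_⟩
    rw [circDist_comm]; exact h.2⟩
  loopless := ⟨fun i h => h.1 rfl⟩

/-- The Harary graph `H_{k,n}` for `k` and `n` both odd: obtained from `H_{k-1,n}` by
adding an edge between vertices `a` and `a + (n-1)/2` for `0 ≤ a ≤ (n-1)/2`. -/
def hararyOddOdd (k n : ℕ) : SimpleGraph (Fin n) where
  Adj i j := i ≠ j ∧ (circDist n i j ≤ (k - 1) / 2 ∨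
    ∃ a : Fin n, a.val ≤ (n - 1) / 2 ∧
      ((i = a ∧ j.val = (a.val + (n - 1) / 2) % n) ∨
       (j = a ∧ i.val = (a.val + (n - 1) / 2) % n)))
  symm := ⟨by
    intro i j h
    refine ⟨h.1.symm, ?_⟩
    rcases h.2 with h2 | ⟨a, ha, hc⟩
    · left; rw [circDist_comm]; exact h2
    · right; exact ⟨a, ha, hc.symm⟩⟩
  loopless := ⟨fun i h => h.1 rfl⟩

lemma wiener_eq_sum_status {V : Type*} [Fintype V] [DecidableEq V] (G : SimpleGraph V) :
    wiener G = (∑ u, (status G u : ℚ)) / 2 := by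
  have hdiag : ∀ p ∈ (univ : Finset (V × V)), p ∉ univ.offDiag →
      (G.dist p.1 p.2 : ℚ) = 0 := by
    rintro ⟨u, v⟩ - huv
    simp_all
  rw [wiener, sum_subset (subset_univ _) hdiag, ← univ_product_univ, sum_product]
  simp [status]

def DiamLeTwo {V : Type*} (G : SimpleGraph V) : Prop :=
  ∀ ⦃u v⦄, u ≠ v → ¬G.Adj u v → (G.commonNeighbors u v).Nonempty

namespace DiamLeTwo

variable {V : Type*} [DecidableEq V] {G : SimpleGraph V} [DecidableRel G.Adj]

lemma dist_add_ite_adj_add_ite_eq (hG : DiamLeTwo G) (u v : V) :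
    G.dist u v + (if G.Adj u v then 1 else 0) + (if u = v then 2 else 0) = 2 := by
  by_cases huv : u = v
  · simp [huv]
  by_cases hadj : G.Adj u v
  · simp [huv, hadj, dist_eq_one_iff_adj.mpr hadj]
  · have : G.edist u v = 2 := edist_eq_two_iff.mpr ⟨huv, hadj, hG huv hadj⟩
    simp [huv, hadj, SimpleGraph.dist, this]

variable [Fintype V]

lemma status_add_degree (hG : DiamLeTwo G) (u : V) :
    status G u + G.degree u + 2 = 2 * Fintype.card V := by
  have := sum_congr rfl fun v (_ : v ∈ univ) => hG.dist_add_ite_adj_add_ite_eq u v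
  simpa [sum_add_distrib, sum_boole, ← neighborFinset_eq_filter, status, mul_comm] using this

lemma wiener_eq_card_mul_sub_card_edgeFinset (hG : DiamLeTwo G) :
    wiener G = Fintype.card V * (Fintype.card V - 1) - #G.edgeFinset := by
  have hstatus (u : V) : (status G u : ℚ) = 2 * Fintype.card V - 2 - G.degree u := by
    rw [eq_sub_iff_add_eq, eq_sub_iff_add_eq]
    exact_mod_cast hG.status_add_degree u
  have hdeg := congrArg (Nat.cast (R := ℚ)) G.sum_degrees_eq_twice_card_edges
  push_cast at hdeg
  simp only [wiener_eq_sum_status, hstatus, sum_sub_distrib, hdeg, sum_const, card_univ,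
    nsmul_eq_mul]
  ring

lemma graphDiam_eq_two (hG : DiamLeTwo G) {u v : V} (huv : u ≠ v) (hadj : ¬G.Adj u v) :
    graphDiam G = 2 := by
  refine le_antisymm (Finset.sup_le fun p _ => ?_) ?_
  · have := hG.dist_add_ite_adj_add_ite_eq p.1 p.2
    omega
  · have := hG.dist_add_ite_adj_add_ite_eq u v
    simp only [huv, hadj, if_false] at this
    exact this ▸ le_sup (f := fun p : V × V => G.dist p.1 p.2) (mem_univ (u, v))

end DiamLeTwo

section Circle

variable {n : ℕ}

lemma circDist_eq_min_val_sub (i j : Fin n) : circDist n i j = min (i - j).val (j - i).val := by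
  rw [circDist, Fin.val_sub, Fin.val_sub, Nat.add_comm (n - j), Nat.add_comm (n - i),
    ← Nat.add_sub_assoc j.isLt.le, ← Nat.add_sub_assoc i.isLt.le]

lemma circDist_eq_min_natDist (i j : Fin n) :
    circDist n i j = min (i - j + (j - i) : ℕ) (n - (i - j + (j - i))) := by
  rw [circDist_eq_min_val_sub]
  rcases lt_trichotomy i j with h | rfl | h
  · rw [Fin.coe_sub_iff_lt.mpr h, Fin.sub_val_of_le h.le]
    omega
  · simp [Fin.sub_val_of_le]
  · rw [Fin.coe_sub_iff_lt.mpr h, Fin.sub_val_of_le h.le]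
    omega

lemma circDist_add_left [NeZero n] (a i j : Fin n) :
    circDist n (a + i) (a + j) = circDist n i j := by
  simp only [circDist_eq_min_val_sub, add_sub_add_left_eq_sub]

lemma card_filter_circDist_zero_le [NeZero n] {r : ℕ} (hr : 2 * r < n) :
    #{t : Fin n | t ≠ 0 ∧ circDist n 0 t ≤ r} = 2 * r := by
  have hval : (univ.filter fun t : Fin n => t ≠ 0 ∧ circDist n 0 t ≤ r).map Fin.valEmbedding =
      Icc 1 r ∪ Ico (n - r) n := by
    ext j
    simp only [mem_map, mem_filter, mem_univ, true_and, Fin.valEmbedding_apply, Fin.exists_iff,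
      circDist_eq_min_natDist, ne_eq, Fin.mk_eq_zero, Fin.coe_ofNat_eq_mod, Nat.zero_mod,
      zero_tsub, tsub_zero, zero_add, exists_and_left, exists_prop, exists_eq_right_right,
      mem_union, mem_Icc, mem_Ico]
    omega
  have hdisj : Disjoint (Icc 1 r) (Ico (n - r) n) :=
    disjoint_left.mpr fun j hj hj' => by rw [mem_Icc] at hj; rw [mem_Ico] at hj'; omega
  rw [← card_map, hval, card_union_of_disjoint hdisj]
  simp only [Nat.card_Icc, Nat.card_Ico]
  omega

lemma hararyEven_neighborFinset [NeZero n] (k : ℕ) (x : Fin n)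
    [Fintype ((hararyEven k n).neighborSet x)] :
    (hararyEven k n).neighborFinset x =
      (univ.filter fun t : Fin n => t ≠ 0 ∧ circDist n 0 t ≤ k / 2).map
        (addLeftEmbedding x) := by
  ext y
  have hy : y = x + (y - x) := (add_sub_cancel x y).symm
  simp only [mem_neighborFinset, mem_map, mem_filter, mem_univ, true_and, addLeftEmbedding_apply]
  constructor
  · rintro ⟨hxy, hdist⟩
    refine ⟨y - x, ⟨sub_ne_zero.mpr (Ne.symm hxy), ?_⟩, hy.symm⟩
    rwa [← circDist_add_left x, add_zero, ← hy]
  · rintro ⟨t, ⟨ht, hdist⟩, rfl⟩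
    refine ⟨by simpa using ht, ?_⟩
    rwa [← circDist_add_left x, add_zero] at hdist

lemma hararyEven_degree {k : ℕ} (hk : Even k) (hkn : k < n) (x : Fin n)
    [Fintype ((hararyEven k n).neighborSet x)] : (hararyEven k n).degree x = k := by
  have : NeZero n := NeZero.of_pos x.pos
  rw [← card_neighborFinset_eq_degree, hararyEven_neighborFinset, card_map,
    card_filter_circDist_zero_le (by omega), Nat.two_mul_div_two_of_even hk]

end Circle

def hararyChords (n : ℕ) : SimpleGraph (Fin n) :=
  SimpleGraph.fromRel fun i j => i.val ≤ (n - 1) / 2 ∧ j.val = i.val + (n - 1) / 2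

lemma hararyChords_adj {n : ℕ} {x y : Fin n} : (hararyChords n).Adj x y ↔ x ≠ y ∧
    ((x.val ≤ (n - 1) / 2 ∧ y.val = x.val + (n - 1) / 2) ∨
      (y.val ≤ (n - 1) / 2 ∧ x.val = y.val + (n - 1) / 2)) :=
  fromRel_adj ..

lemma hararyOddOdd_eq_sup (k n : ℕ) :
    hararyOddOdd k n = hararyEven (k - 1) n ⊔ hararyChords n := by
  ext x y
  have hchord : (∃ a : Fin n, a.val ≤ (n - 1) / 2 ∧
      ((x = a ∧ y.val = (a.val + (n - 1) / 2) % n) ∨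
        (y = a ∧ x.val = (a.val + (n - 1) / 2) % n))) ↔
      (x.val ≤ (n - 1) / 2 ∧ y.val = x.val + (n - 1) / 2) ∨
        (y.val ≤ (n - 1) / 2 ∧ x.val = y.val + (n - 1) / 2) := by
    constructor
    · rintro ⟨a, ha, ⟨rfl, hy⟩ | ⟨rfl, hx⟩⟩
      · rw [Nat.mod_eq_of_lt (by omega)] at hy
        exact Or.inl ⟨ha, hy⟩
      · rw [Nat.mod_eq_of_lt (by omega)] at hx
        exact Or.inr ⟨ha, hx⟩
    · rintro (⟨hx, hy⟩ | ⟨hy, hx⟩)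
      · exact ⟨x, hx, Or.inl ⟨rfl, by rw [Nat.mod_eq_of_lt (by omega)]; exact hy⟩⟩
      · exact ⟨y, hy, Or.inr ⟨rfl, by rw [Nat.mod_eq_of_lt (by omega)]; exact hx⟩⟩
  simp only [hararyOddOdd, hararyEven, sup_adj, hararyChords_adj, hchord]
  tauto

lemma hararyChords_degree {n : ℕ} (hn : Odd n) (h3 : 3 ≤ n) (x : Fin n)
    [Fintype ((hararyChords n).neighborSet x)] :
    (hararyChords n).degree x = if x.val = (n - 1) / 2 then 2 else 1 := by
  obtain ⟨h, rfl⟩ := hn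
  rw [← card_neighborFinset_eq_degree]
  rcases lt_trichotomy x.val h with hx | hx | hx
  · rw [if_neg (by omega), card_eq_one]
    refine ⟨⟨x + h, by omega⟩, ?_⟩
    ext y
    simp only [mem_neighborFinset, hararyChords_adj, mem_singleton, Fin.ext_iff, ne_eq]
    omega
  · rw [if_pos (by omega), card_eq_two]
    refine ⟨⟨0, by omega⟩, ⟨2 * h, by omega⟩, by rw [Ne, Fin.mk.injEq]; omega, ?_⟩
    ext y
    simp only [mem_neighborFinset, hararyChords_adj, mem_insert, mem_singleton, Fin.ext_iff, ne_eq]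
    omega
  · rw [if_neg (by omega), card_eq_one]
    refine ⟨⟨x - h, by omega⟩, ?_⟩
    ext y
    simp only [mem_neighborFinset, hararyChords_adj, mem_singleton, Fin.ext_iff, ne_eq]
    omega

lemma disjoint_hararyEven_hararyChords {k n : ℕ} (hkn : k / 2 < (n - 1) / 2) :
    Disjoint (hararyEven k n) (hararyChords n) := by
  refine SimpleGraph.disjoint_left.mpr fun x y hring hchord => ?_
  rw [hararyChords_adj] at hchord
  simp only [hararyEven, circDist_eq_min_natDist] at hring
  omega

lemma hararyOddOdd_degree {k n : ℕ} (hk : Odd k) (hn : Odd n) (hkn : k < n) (x : Fin n)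
    [Fintype ((hararyOddOdd k n).neighborSet x)] :
    (hararyOddOdd k n).degree x = if x.val = (n - 1) / 2 then k + 1 else k := by
  classical
  obtain ⟨m, rfl⟩ := hk
  obtain ⟨h, rfl⟩ := hn
  have hunion : (hararyOddOdd (2 * m + 1) _).neighborFinset x =
      (hararyEven (2 * m) _).neighborFinset x ∪ (hararyChords _).neighborFinset x := by
    ext y
    simp [hararyOddOdd_eq_sup]
  have hdisj := disjoint_neighborFinset_of_disjoint _ _ x
    (disjoint_hararyEven_hararyChords (k := 2 * m) (n := 2 * h + 1) (by omega))
  rw [← card_neighborFinset_eq_degree, hunion, card_union_of_disjoint hdisj,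
    card_neighborFinset_eq_degree, card_neighborFinset_eq_degree,
    hararyEven_degree (even_two_mul m) (by omega), hararyChords_degree ⟨h, rfl⟩ (by omega)]
  split_ifs <;> rfl

lemma hararyOddOdd_adj_iff_val {k n : ℕ} {x y : Fin n} :
    (hararyOddOdd k n).Adj x y ↔ x.val ≠ y.val ∧
      (min (x - y + (y - x) : ℕ) (n - (x - y + (y - x))) ≤ (k - 1) / 2 ∨
        (x.val ≤ (n - 1) / 2 ∧ y.val = x.val + (n - 1) / 2) ∨
        (y.val ≤ (n - 1) / 2 ∧ x.val = y.val + (n - 1) / 2)) := by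
  rw [hararyOddOdd_eq_sup, sup_adj, hararyChords_adj, Fin.val_ne_iff]
  simp only [hararyEven, circDist_eq_min_natDist]
  tauto

lemma hararyOddOdd_diamLeTwo {k n : ℕ} (hko : Odd k) (hno : Odd n) (hkn : k + 1 < n)
    (hnk : n ≤ 3 * k - 2) : DiamLeTwo (hararyOddOdd k n) := by
  obtain ⟨m, rfl⟩ := hko
  obtain ⟨h, rfl⟩ := hno
  intro x y hxy hna
  wlog hlt : x < y generalizing x y
  · rw [commonNeighbors_symm]
    exact this hxy.symm (fun hyx => hna hyx.symm) (lt_of_le_of_ne (not_lt.mp hlt) hxy.symm)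
  simp only [Set.Nonempty, mem_commonNeighbors, hararyOddOdd_adj_iff_val] at hna ⊢
  rw [Fin.lt_def] at hlt
  have hy := y.isLt
  by_cases hnear : y - x ≤ 2 * m
  · exact ⟨⟨x + m, by omega⟩, by simp only; omega⟩
  by_cases hwrap : x + (2 * h + 1) - y ≤ 2 * m
  · by_cases hxm : m ≤ x
    · exact ⟨⟨x - m, by omega⟩, by simp only; omega⟩
    · exact ⟨⟨x + (2 * h + 1) - m, by omega⟩, by simp only; omega⟩
  -- Since `h ≤ 3m`, the far end of the chord at `x` lies within `m` of `y`.
  by_cases hxh : x ≤ h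
  · exact ⟨⟨x + h, by omega⟩, by simp only; omega⟩
  · exact ⟨⟨x - h, by omega⟩, by simp only; omega⟩

/-- For `k, n` both odd, `k ≥ 3`, `k + 1 < n ≤ 3k - 2`: `H_{k,n}` has diameter
`2`, the unique vertex `(n-1)/2` of degree `k+1` has status `2n-k-3`, every other
vertex (of degree `k`) has status `2n-k-2`, and
`W(H_{k,n}) = (1/2)·n·(2n-k-2) - 1/2`. -/
theorem hararyOddOdd_small (k n : ℕ) (hko : Odd k) (hno : Odd n)
    (h1 : k + 1 < n) (h2 : n ≤ 3 * k - 2) :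
    graphDiam (hararyOddOdd k n) = 2 ∧
    status (hararyOddOdd k n) (⟨(n - 1) / 2, by omega⟩ : Fin n) = 2 * n - k - 3 ∧
    (∀ x : Fin n, x.val ≠ (n - 1) / 2 →
      status (hararyOddOdd k n) x = 2 * n - k - 2) ∧
    wiener (hararyOddOdd k n) =
      (1 / 2 : ℚ) * (n : ℚ) * (2 * (n : ℚ) - k - 2) - 1 / 2 := by
  classical
  set G := hararyOddOdd k n
  set c : Fin n := ⟨(n - 1) / 2, by omega⟩
  have hG : DiamLeTwo G := hararyOddOdd_diamLeTwo hko hno h1 h2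
  have hdeg (x : Fin n) : G.degree x = k + if x = c then 1 else 0 := by
    rw [hararyOddOdd_degree hko hno (by omega)]
    simp only [Fin.ext_iff, c]
    split_ifs <;> rfl
  have hedges : 2 * #G.edgeFinset = n * k + 1 := by
    simp [← G.sum_degrees_eq_twice_card_edges, hdeg, sum_add_distrib, mul_comm]
  have hfar : ¬G.Adj ⟨0, by omega⟩ ⟨(n - 1) / 2 + 1, by omega⟩ := by
    rw [hararyOddOdd_adj_iff_val]
    simp only
    omega
  refine ⟨hG.graphDiam_eq_two (by simp [Fin.ext_iff]) hfar, ?_, fun x hx => ?_, ?_⟩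
  · have := hG.status_add_degree c
    simp only [hdeg, ↓reduceIte, Fintype.card_fin] at this
    omega
  · have := hG.status_add_degree x
    have hxc : x ≠ c := fun hxc => hx (congrArg Fin.val hxc)
    simp only [hdeg, hxc, ↓reduceIte, Fintype.card_fin] at this
    omega
  · rw [hG.wiener_eq_card_mul_sub_card_edgeFinset, Fintype.card_fin]
    have : (2 * #G.edgeFinset : ℚ) = n * k + 1 := by exact_mod_cast hedges
    linarith
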